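/- Let X be a real normed space, K ⊆ X, ū ∈ K, and let Z : X → ℝ≥0 be a seminorm-like function (u ↦ ‖z_{ū,u−ū}‖_{L²}). Assume the Taylor identity J'(u)(u−ū) − J'(ū)(u−ū) = J''(ū+θ(u−ū))(u−ū)² for some θ ∈ [0,1], and that for every ε > 0 there is δ > 0 such that |J''(ū)(u−ū)² − J''(ū+θ(u−ū))(u−ū)²| ≤ ε·Z(u)² for all u ∈ K with ‖u−ū‖ < δ and θ ∈ [0,1]. Then the following are equivalent: (1) there exist c, α > 0 with J'(ū)(u−ū) + J''(ū)(u−ū)² ≥ c·Z(u)² for all u ∈ K with ‖u−ū‖ < α; (2) there exist c', α' > 0 with J'(u)(u−ū) ≥ c'·Z(u)² for all u ∈ K with ‖u−ū‖ < α'. -/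

import Mathlib

/-!
By the Taylor identity, `J'(u)(u - ū)` and `J'(ū)(u - ū) + J''(ū)(u - ū)²` differ by
`J''(ū)(u - ū)² - J''(ū + θ(u - ū))(u - ū)²`, which is `o(Z(u)²)` as `u → ū` within `K`.
Coercivity of either one with constant `c` therefore gives coercivity of the other with
constant `c / 2`, on a smaller neighbourhood.
-/

open Filter Topology

theorem Filter.exists_eventually_mul_le_of_abs_sub_le {α : Type*} {l : Filter α}
    {F G q : α → ℝ} (hFG : ∀ ε > 0, ∀ᶠ x in l, |F x - G x| ≤ ε * q x)
    (hF : ∃ c > 0, ∀ᶠ x in l, c * q x ≤ F x) :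
    ∃ c > 0, ∀ᶠ x in l, c * q x ≤ G x := by
  obtain ⟨c, hc, hcF⟩ := hF
  refine ⟨c / 2, half_pos hc, ?_⟩
  filter_upwards [hcF, hFG (c / 2) (half_pos hc)] with x hcx hx
  linarith [(abs_le.mp hx).2]

theorem Filter.exists_eventually_mul_le_iff_of_abs_sub_le {α : Type*} {l : Filter α}
    {F G q : α → ℝ} (hFG : ∀ ε > 0, ∀ᶠ x in l, |F x - G x| ≤ ε * q x) :
    (∃ c > 0, ∀ᶠ x in l, c * q x ≤ F x) ↔ ∃ c > 0, ∀ᶠ x in l, c * q x ≤ G x :=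
  ⟨exists_eventually_mul_le_of_abs_sub_le hFG,
    exists_eventually_mul_le_of_abs_sub_le fun ε hε => (hFG ε hε).mono fun x hx => by
      rwa [abs_sub_comm]⟩

theorem eventually_nhdsWithin_iff_exists_norm_sub_lt {X : Type*} [SeminormedAddCommGroup X]
    {K : Set X} {x : X} {p : X → Prop} :
    (∀ᶠ u in 𝓝[K] x, p u) ↔ ∃ α > 0, ∀ u ∈ K, ‖u - x‖ < α → p u := by
  simp only [eventually_nhdsWithin_iff, Metric.eventually_nhds_iff, dist_eq_norm]
  exact exists_congr fun _ => and_congr_right fun _ => forall_congr' fun _ => imp.swap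

theorem stmt_12_general {X : Type*} [NormedAddCommGroup X] [NormedSpace ℝ X]
    (K : Set X) (ubar : X)
    (Z : X → ℝ)
    (J' : X → X → ℝ) (J'' : X → X → ℝ)
    (hTaylor : ∀ u ∈ K, ∃ θ ∈ Set.Icc (0:ℝ) 1,
      J' u (u - ubar) - J' ubar (u - ubar) = J'' (ubar + θ • (u - ubar)) (u - ubar))
    (hCont : ∀ ε > (0:ℝ), ∃ δ > (0:ℝ), ∀ u ∈ K, ‖u - ubar‖ < δ → ∀ θ ∈ Set.Icc (0:ℝ) 1,
      |J'' ubar (u - ubar) - J'' (ubar + θ • (u - ubar)) (u - ubar)| ≤ ε * Z u ^ 2) :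
    (∃ c > (0:ℝ), ∃ α > (0:ℝ), ∀ u ∈ K, ‖u - ubar‖ < α →
      J' ubar (u - ubar) + J'' ubar (u - ubar) ≥ c * Z u ^ 2)
    ↔
    (∃ c' > (0:ℝ), ∃ α' > (0:ℝ), ∀ u ∈ K, ‖u - ubar‖ < α' →
      J' u (u - ubar) ≥ c' * Z u ^ 2) := by
  simp only [ge_iff_le, ← eventually_nhdsWithin_iff_exists_norm_sub_lt] at hCont ⊢
  refine exists_eventually_mul_le_iff_of_abs_sub_le fun ε hε => ?_
  filter_upwards [hCont ε hε, self_mem_nhdsWithin] with u hu huK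
  obtain ⟨θ, hθ, hT⟩ := hTaylor u huK
  calc |J' ubar (u - ubar) + J'' ubar (u - ubar) - J' u (u - ubar)|
      = |J'' ubar (u - ubar) - J'' (ubar + θ • (u - ubar)) (u - ubar)| := by
        congr 1; linarith
    _ ≤ ε * Z u ^ 2 := hu θ hθ

theorem stmt_12 {X : Type*} [NormedAddCommGroup X] [NormedSpace ℝ X]
    (K : Set X) (ubar : X) (hubar : ubar ∈ K)
    (Z : X → ℝ) (hZ : ∀ u, 0 ≤ Z u)
    (J' : X → X → ℝ) (J'' : X → X → ℝ)
    (hTaylor : ∀ u ∈ K, ∃ θ ∈ Set.Icc (0:ℝ) 1,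
      J' u (u - ubar) - J' ubar (u - ubar) = J'' (ubar + θ • (u - ubar)) (u - ubar))
    (hCont : ∀ ε > (0:ℝ), ∃ δ > (0:ℝ), ∀ u ∈ K, ‖u - ubar‖ < δ → ∀ θ ∈ Set.Icc (0:ℝ) 1,
      |J'' ubar (u - ubar) - J'' (ubar + θ • (u - ubar)) (u - ubar)| ≤ ε * Z u ^ 2) :
    (∃ c > (0:ℝ), ∃ α > (0:ℝ), ∀ u ∈ K, ‖u - ubar‖ < α →
      J' ubar (u - ubar) + J'' ubar (u - ubar) ≥ c * Z u ^ 2)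
    ↔
    (∃ c' > (0:ℝ), ∃ α' > (0:ℝ), ∀ u ∈ K, ‖u - ubar‖ < α' →
      J' u (u - ubar) ≥ c' * Z u ^ 2) :=
  stmt_12_general K ubar Z J' J'' hTaylor hCont
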